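/- If P is a positive integer and n \ge 1 is such that T^n(P) = P (an \alpha-periodic Collatz sequence of period n), then 3^{m_n(P)} < 2^n, i.e. the principal coefficient satisfies A_n(P) < 1. -/
import Mathlib


open Filter

/-- The (accelerated) Collatz map `T(P) = P/2` if `P` even, `(3P+1)/2` if `P` odd. -/
def collatz (p : ℕ) : ℕ := if p % 2 = 0 then p / 2 else (3 * p + 1) / 2

/-- `collatzOddCount P n = m_n(P)`, the number of `k < n` with `T^k(P)` odd. -/
def collatzOddCount (P n : ℕ) : ℕ :=
  ((Finset.range n).filter fun k => collatz^[k] P % 2 = 1).card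

/-- The principal coefficient `A_n(P) = 3^{m_n(P)} / 2^n`. -/
noncomputable def collatzA (P n : ℕ) : ℝ := 3 ^ collatzOddCount P n / 2 ^ n

/-- The adjustment coefficient `B_n(P) = T^n(P) - A_n(P) * P`. -/
noncomputable def collatzB (P n : ℕ) : ℝ := (collatz^[n] P : ℝ) - collatzA P n * P

lemma collatzOddCount_succ (P n : ℕ) :
    collatzOddCount P (n + 1) =
      collatzOddCount P n + (if collatz^[n] P % 2 = 1 then 1 else 0) := by
  unfold collatzOddCount
  rw [Finset.range_add_one, Finset.filter_insert]
  split
  · rw [Finset.card_insert_of_notMem (by simp)]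
  · simp

lemma two_mul_collatz (p : ℕ) :
    2 * collatz p = if p % 2 = 1 then 3 * p + 1 else p := by
  unfold collatz
  rcases Nat.even_or_odd p with h | h
  · have h2 : p % 2 = 0 := Nat.even_iff.mp h
    simp [h2, Nat.two_mul_div_two_of_even h]
  · have h2 : p % 2 = 1 := Nat.odd_iff.mp h
    have : Even (3 * p + 1) := by
      rcases h with ⟨k, hk⟩; exact ⟨3 * k + 2, by omega⟩
    simp [h2, Nat.two_mul_div_two_of_even this]

lemma key (P : ℕ) : ∀ n : ℕ,
    3 ^ collatzOddCount P n * P + (if collatzOddCount P n = 0 then 0 else 1)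
      ≤ 2 ^ n * collatz^[n] P := by
  intro n
  induction n with
  | zero => simp [collatzOddCount]
  | succ n ih =>
    rw [Function.iterate_succ_apply', collatzOddCount_succ, pow_succ,
      mul_assoc, two_mul_collatz]
    have h1 : 1 ≤ 2 ^ n := Nat.one_le_two_pow
    by_cases h : collatz^[n] P % 2 = 1
    · simp only [h, if_true]
      have := Nat.mul_le_mul_left (2 ^ n) (Nat.le_refl (collatz^[n] P))
      calc 3 ^ (collatzOddCount P n + 1) * P +
            (if collatzOddCount P n + 1 = 0 then 0 else 1)
          = 3 * (3 ^ collatzOddCount P n * P) + 1 := by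
            rw [if_neg (by omega : ¬(collatzOddCount P n + 1 = 0))]; ring
        _ ≤ 3 * (2 ^ n * collatz^[n] P) + 2 ^ n := by
            have h3 : 3 ^ collatzOddCount P n * P ≤ 2 ^ n * collatz^[n] P := by
              have := ih; omega
            omega
        _ = 2 ^ n * (3 * collatz^[n] P + 1) := by ring
    · simp only [h, if_false, add_zero]
      exact ih

theorem stmt_7 (P : ℕ) (hP : 0 < P) (n : ℕ) (hn : 1 ≤ n)
    (hcyc : collatz^[n] P = P) :
    3 ^ collatzOddCount P n < 2 ^ n ∧ collatzA P n < 1 := by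
  have hk := key P n
  rw [hcyc] at hk
  have hlt : 3 ^ collatzOddCount P n < 2 ^ n := by
    by_cases hm : collatzOddCount P n = 0
    · rw [hm, pow_zero]
      calc (1 : ℕ) < 2 ^ 1 := by norm_num
        _ ≤ 2 ^ n := Nat.pow_le_pow_right (by norm_num) hn
    · simp only [hm, if_false] at hk
      have : 3 ^ collatzOddCount P n * P < 2 ^ n * P := by omega
      exact Nat.lt_of_mul_lt_mul_right this
  refine ⟨hlt, ?_⟩
  unfold collatzA
  rw [div_lt_one (by positivity)]
  exact_mod_cast hlt
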